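/- The one-sided derivative at c = 0 of the shortening savings function c ↦ Sh(c, φ) equals 2 − (3/2)·B − (1/2)·√(4 − 3B²), where B = (2/√3)·sin(φ/2); moreover this quantity is strictly positive for 0 < φ < 2π/3. -/

import Mathlib

/-!
If `sinh b = B sinh c`, the law of cosines `cosh c = cosh a cosh b + ½ sinh a sinh b` is the
quadratic equation `(cosh b + ½ sinh b) x² - 2 cosh c x + (cosh b - ½ sinh b) = 0` in `x = exp a`,
whose reduced discriminant is `(√(4 - 3B²) sinh c / 2)²`. For `0 ≤ B ≤ 1` and `c ≥ 0` the larger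
root is `≥ 1`, and since `a ↦ α cosh a + β sinh a` is injective on `[0, ∞)` this gives the closed
form `a = log (cosh c + √(4 - 3B²)/2 sinh c) - log (cosh b + ½ sinh b)`. So `Sh` is differentiable
at `0`, with derivative `2 - 2B - (√(4 - 3B²) - B)/2`. Positivity for `B < 1` is
`(2 - 3B/2)² - (4 - 3B²)/4 = 3 (1 - B)²`.
-/

open Real Filter

noncomputable def thirdSide (B c b : ℝ) : ℝ :=
  log (cosh c + √(4 - 3 * B ^ 2) / 2 * sinh c) - log (cosh b + 1 / 2 * sinh b)

theorem cosh_add_mul_sinh_pos {k : ℝ} (hk : |k| ≤ 1) (x : ℝ) : 0 < cosh x + k * sinh x := by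
  have hsinh : |sinh x| < cosh x :=
    abs_lt_of_sq_lt_sq (by rw [cosh_sq]; linarith) (cosh_pos x).le
  have : |k * sinh x| ≤ |sinh x| := by
    rw [abs_mul]; exact mul_le_of_le_one_left (abs_nonneg _) hk
  linarith [neg_abs_le (k * sinh x)]

theorem sqrt_four_sub_three_mul_sq_le_two (B : ℝ) : √(4 - 3 * B ^ 2) ≤ 2 :=
  sqrt_le_iff.mpr ⟨zero_le_two, by nlinarith [sq_nonneg B]⟩

theorem cosh_eq_cosh_thirdSide_mul_add {B b c : ℝ} (hb : sinh b = B * sinh c)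
    (hB : 3 * B ^ 2 ≤ 4) :
    cosh c = cosh (thirdSide B c b) * cosh b + 1 / 2 * sinh (thirdSide B c b) * sinh b := by
  set S := √(4 - 3 * B ^ 2)
  have hS2 : S ^ 2 = 4 - 3 * B ^ 2 := sq_sqrt (by linarith)
  have hS : |S / 2| ≤ 1 := by
    rw [abs_le]; constructor <;>
      linarith [sqrt_nonneg (4 - 3 * B ^ 2), sqrt_four_sub_three_mul_sq_le_two B]
  set P := cosh c + S / 2 * sinh c
  set Q := cosh b + 1 / 2 * sinh b
  have hP := cosh_add_mul_sinh_pos hS c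
  have hQ := cosh_add_mul_sinh_pos (k := 1 / 2) (by norm_num [abs_of_pos]) b
  have hexp : exp (thirdSide B c b) = P / Q := by
    rw [thirdSide, exp_sub, exp_log hP, exp_log hQ]
  rw [cosh_eq (thirdSide B c b), sinh_eq (thirdSide B c b), exp_neg, hexp, inv_div]
  field_simp
  rw [eq_div_iff (by positivity)]
  linear_combination (-2 * Q) * (sinh c ^ 2 / 4 * hS2 + cosh_sq b - cosh_sq c
    + 3 / 4 * (sinh b + B * sinh c) * hb)

theorem thirdSide_nonneg {B b c : ℝ} (hB₀ : 0 ≤ B) (hB₁ : B ≤ 1) (hc : 0 ≤ c)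
    (hb : sinh b = B * sinh c) : 0 ≤ thirdSide B c b := by
  have hsc : 0 ≤ sinh c := sinh_nonneg_iff.mpr hc
  have hB2 : B ^ 2 ≤ 1 := by nlinarith
  have hBS : B ≤ √(4 - 3 * B ^ 2) := le_sqrt_of_sq_le (by linarith)
  have hcosh : cosh b ≤ cosh c := by
    refine (pow_le_pow_iff_left₀ (cosh_pos b).le (cosh_pos c).le two_ne_zero).mp ?_
    rw [cosh_sq, cosh_sq, hb]
    nlinarith [mul_le_mul_of_nonneg_right hB2 (sq_nonneg (sinh c))]
  refine sub_nonneg.mpr (log_le_log (cosh_add_mul_sinh_pos (by norm_num [abs_of_pos]) b) ?_)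
  rw [hb]
  nlinarith [mul_le_mul_of_nonneg_right hBS hsc]

theorem strictMonoOn_mul_cosh_add_mul_sinh {α β : ℝ} (hα : 0 < α) (hβ : 0 ≤ β) :
    StrictMonoOn (fun t => α * cosh t + β * sinh t) (Set.Ici 0) := by
  intro x hx y hy hxy
  have := cosh_strictMonoOn hx hy hxy
  have := sinh_strictMono.monotone hxy.le
  simp only
  nlinarith

theorem eq_thirdSide_of_cosh_eq {B a b c : ℝ} (hB₀ : 0 ≤ B) (hB₁ : B ≤ 1) (hc : 0 ≤ c)
    (hb : sinh b = B * sinh c) (ha : 0 ≤ a)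
    (h : cosh c = cosh a * cosh b + 1 / 2 * sinh a * sinh b) : a = thirdSide B c b := by
  have hsb : 0 ≤ sinh b := hb ▸ mul_nonneg hB₀ (sinh_nonneg_iff.mpr hc)
  have hmono :=
    strictMonoOn_mul_cosh_add_mul_sinh (cosh_pos b) (β := 1 / 2 * sinh b) (by positivity)
  refine hmono.injOn ha (thirdSide_nonneg hB₀ hB₁ hc hb) ?_
  have := cosh_eq_cosh_thirdSide_mul_add hb (by nlinarith)
  linear_combination this - h

theorem hasDerivAt_log_cosh_add_mul_sinh (k : ℝ) :
    HasDerivAt (fun t => log (cosh t + k * sinh t)) k 0 := by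
  simpa using ((hasDerivAt_cosh 0).add ((hasDerivAt_sinh 0).const_mul k)).log (by simp)

theorem hasDerivAt_arsinh_mul_sinh (B : ℝ) :
    HasDerivAt (fun c => arsinh (B * sinh c)) B 0 := by
  simpa [Function.comp_def] using
    (hasDerivAt_arsinh (B * sinh 0)).comp 0 ((hasDerivAt_sinh 0).const_mul B)

theorem hasDerivAt_thirdSide (B : ℝ) :
    HasDerivAt (fun c => thirdSide B c (arsinh (B * sinh c)))
      ((√(4 - 3 * B ^ 2) - B) / 2) 0 := by
  have hQ := (hasDerivAt_log_cosh_add_mul_sinh (1 / 2)).comp_of_eq 0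
    (hasDerivAt_arsinh_mul_sinh B) (by simp)
  rw [show (√(4 - 3 * B ^ 2) - B) / 2 = √(4 - 3 * B ^ 2) / 2 - 1 / 2 * B by ring]
  exact (hasDerivAt_log_cosh_add_mul_sinh _).sub hQ

theorem zero_lt_two_sub_sub_sqrt {B : ℝ} (hB : B < 1) :
    0 < 2 - 3 / 2 * B - 1 / 2 * √(4 - 3 * B ^ 2) := by
  have h : √(4 - 3 * B ^ 2) < 4 - 3 * B :=
    (sqrt_lt' (by linarith)).mpr (by nlinarith [sq_pos_of_pos (sub_pos.mpr hB)])
  linarith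

theorem mem_Ioo_two_div_sqrt_three_mul_sin_half {φ : ℝ} (hφ : φ ∈ Set.Ioo 0 (2 * π / 3)) :
    (2 / √3) * sin (φ / 2) ∈ Set.Ioo 0 1 := by
  obtain ⟨hφ₀, hφ₁⟩ := hφ
  have hsin : sin (φ / 2) < sin (π / 3) :=
    strictMonoOn_sin ⟨by linarith [pi_pos], by linarith⟩
      ⟨by linarith [pi_pos], by linarith [pi_pos]⟩ (by linarith)
  rw [sin_pi_div_three] at hsin
  refine ⟨mul_pos (by positivity) (sin_pos_of_pos_of_lt_pi (by linarith) (by linarith)), ?_⟩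
  calc 2 / √3 * sin (φ / 2) < 2 / √3 * (√3 / 2) := by gcongr
    _ = 1 := by field_simp

theorem hasDerivAt_shortening (B : ℝ) :
    HasDerivAt (fun c => 2 * c - 2 * arsinh (B * sinh c) - thirdSide B c (arsinh (B * sinh c)))
      (2 - 3 / 2 * B - 1 / 2 * √(4 - 3 * B ^ 2)) 0 := by
  rw [show 2 - 3 / 2 * B - 1 / 2 * √(4 - 3 * B ^ 2)
    = 2 * 1 - 2 * B - (√(4 - 3 * B ^ 2) - B) / 2 by ring]
  exact (((hasDerivAt_id 0).const_mul 2).sub ((hasDerivAt_arsinh_mul_sinh B).const_mul 2)).sub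
    (hasDerivAt_thirdSide B)

/-- The one-sided derivative at `c = 0` of the shortening savings function
`c ↦ Sh(c,φ) = 2c - 2 b(c) - a(c)`, where `b(c) = arsinh (B * sinh c)` with
`B = (2/√3) * sin (φ/2)` (hyperbolic law of sines) and `a(c) ≥ 0` is determined by the
hyperbolic law of cosines `cosh c = cosh (a c) * cosh (b c) + (1/2) * sinh (a c) * sinh (b c)`,
equals `2 - (3/2) B - (1/2) √(4 - 3 B²)`; since `Sh(0,φ) = 0`, this derivative is the limit
of `Sh(c,φ)/c` as `c → 0⁺`. Moreover this quantity is strictly positive for `0 < φ < 2π/3`. -/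
theorem shortening_deriv_at_zero (φ : ℝ) (hφ : φ ∈ Set.Ioo 0 (2 * π / 3))
    (B : ℝ) (hB : B = (2 / Real.sqrt 3) * Real.sin (φ / 2))
    (a b Sh : ℝ → ℝ)
    (hb : ∀ c, b c = Real.arsinh (B * Real.sinh c))
    (ha_pos : ∀ c, 0 < c → 0 ≤ a c)
    (hcos : ∀ c, 0 < c →
      Real.cosh c = Real.cosh (a c) * Real.cosh (b c)
        + (1 / 2) * Real.sinh (a c) * Real.sinh (b c))
    (hSh : ∀ c, Sh c = 2 * c - 2 * b c - a c) :
    Tendsto (fun c => Sh c / c) (nhdsWithin 0 (Set.Ioi 0))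
        (nhds (2 - (3 / 2) * B - (1 / 2) * Real.sqrt (4 - 3 * B ^ 2))) ∧
      0 < 2 - (3 / 2) * B - (1 / 2) * Real.sqrt (4 - 3 * B ^ 2) := by
  obtain ⟨hB₀, hB₁⟩ := hB ▸ mem_Ioo_two_div_sqrt_three_mul_sin_half hφ
  have ha : ∀ c, 0 < c → a c = thirdSide B c (b c) := fun c hc =>
    eq_thirdSide_of_cosh_eq hB₀.le hB₁.le hc.le (by rw [hb, sinh_arsinh]) (ha_pos c hc) (hcos c hc)
  refine ⟨(hasDerivAt_shortening B).tendsto_slope_zero_right.congr' ?_,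
    zero_lt_two_sub_sub_sqrt hB₁⟩
  filter_upwards [self_mem_nhdsWithin] with c hc
  simp [thirdSide, hSh, ha c hc, hb, div_eq_inv_mul]
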